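/- For a Hermitian matrix M of size n and its main minor M' of size n−1 (obtained by deleting the last row and column), the ordered eigenvalues μ₁ ≥ ... ≥ μ_{n-1} of M' interlace the ordered eigenvalues λ₁ ≥ ... ≥ λ_n of M: λ₁ ≥ μ₁ ≥ λ₂ ≥ μ₂ ≥ ... ≥ μ_{n-1} ≥ λ_n. -/

import Mathlib

/-!
For a Hermitian `A` and a convex `s ⊆ ℝ`, the Rayleigh quotient of `A` on the span of its
eigenvectors with eigenvalue in `s` is a convex combination of those eigenvalues, so it takes
values in `s`; that span has dimension `#{i | λᵢ ∈ s}`. An isometry `P` carries the Rayleigh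
quotient of the compression `Pᴴ A P` to that of `A`. Hence, for disjoint convex `s` and `s'`, the
image under `P` of the span for `Pᴴ A P` and `s` meets the span for `A` and `s'` trivially, and
`#{j | μⱼ ∈ s} + #{i | λᵢ ∈ s'} ≤ n + 1`. With `s` one of the half-lines `[μᵢ, ∞)`, `(-∞, μᵢ]`
and `s' = sᶜ` this reads `#{μ ∈ s} ≤ #{λ ∈ s}`, which for ordered eigenvalues are the two
interlacing inequalities.
-/

open Finset

namespace ContinuousLinearMap

variable {𝕜 E : Type*} [RCLike 𝕜] [NormedAddCommGroup E] [InnerProductSpace 𝕜 E]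

theorem rayleighQuotient_mem_of_mem_span_eigenvectors {ι : Type*} [Fintype ι] (T : E →L[𝕜] E)
    {v : ι → E} (hv : Orthonormal 𝕜 v) {μ : ι → ℝ} (hTv : ∀ i, T (v i) = (μ i : 𝕜) • v i)
    {s : Set ℝ} (hs : Convex ℝ s) (hμ : ∀ i, μ i ∈ s) {x : E}
    (hx : x ∈ Submodule.span 𝕜 (Set.range v)) (hx0 : x ≠ 0) :
    T.rayleighQuotient x ∈ s := by
  obtain ⟨c, rfl⟩ := (Submodule.mem_span_range_iff_exists_fun 𝕜).1 hx
  have hTx : T (∑ i, c i • v i) = ∑ i, (c i * μ i) • v i := by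
    simp only [map_sum, map_smul, hTv, smul_smul]
  have hnorm : ‖∑ i, c i • v i‖ ^ 2 = ∑ i, ‖c i‖ ^ 2 := by
    rw [@norm_sq_eq_re_inner 𝕜, hv.inner_sum, map_sum]
    simp [RCLike.conj_mul]
  have hquad : T.reApplyInnerSelf (∑ i, c i • v i) = ∑ i, ‖c i‖ ^ 2 • μ i := by
    rw [reApplyInnerSelf_apply, hTx, hv.inner_sum, map_sum]
    refine Finset.sum_congr rfl fun i _ => ?_
    rw [map_mul (starRingEnd 𝕜), RCLike.conj_ofReal, mul_right_comm, RCLike.conj_mul, smul_eq_mul,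
      ← RCLike.ofReal_pow, ← RCLike.ofReal_mul, RCLike.ofReal_re]
  have hpos : 0 < ∑ i, ‖c i‖ ^ 2 := hnorm ▸ by positivity
  rw [rayleighQuotient, hquad, hnorm, div_eq_inv_mul, ← smul_eq_mul]
  exact hs.centerMass_mem (fun i _ => by positivity) hpos fun i _ => hμ i

end ContinuousLinearMap

namespace Matrix

variable {𝕜 : Type*} [RCLike 𝕜] {m n : Type*} [Fintype n] [DecidableEq n]

theorem conjTranspose_submatrix_one_mul_mul (A : Matrix n n 𝕜) (e : m → n) :
    ((1 : Matrix n n 𝕜).submatrix id e)ᴴ * A * (1 : Matrix n n 𝕜).submatrix id e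
      = A.submatrix e e := by
  ext i j
  simp [mul_apply, one_apply]

theorem conjTranspose_submatrix_one_mul_self [DecidableEq m] {e : m → n}
    (he : Function.Injective e) :
    ((1 : Matrix n n 𝕜).submatrix id e)ᴴ * (1 : Matrix n n 𝕜).submatrix id e = 1 := by
  rw [← Matrix.mul_one (_ᴴ), conjTranspose_submatrix_one_mul_mul, submatrix_one e he]

variable [Fintype m] [DecidableEq m]

theorem inner_toEuclideanLin_conjTranspose_mul_mul (P : Matrix n m 𝕜) (A : Matrix n n 𝕜)
    (x y : EuclideanSpace 𝕜 m) :
    inner 𝕜 (toEuclideanLin (Pᴴ * A * P) x) y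
      = inner 𝕜 (toEuclideanLin A (toEuclideanLin P x)) (toEuclideanLin P y) := by
  rw [toEuclideanLin, toLpLin_mul 2 2, toLpLin_mul 2 2, LinearMap.comp_apply, LinearMap.comp_apply,
    ← toEuclideanLin, toEuclideanLin_conjTranspose_eq_adjoint, LinearMap.adjoint_inner_left]

variable {P : Matrix n m 𝕜}

theorem inner_toEuclideanLin_toEuclideanLin (hP : Pᴴ * P = 1) (x y : EuclideanSpace 𝕜 m) :
    inner 𝕜 (toEuclideanLin P x) (toEuclideanLin P y) = inner 𝕜 x y := by
  simpa [hP] using (inner_toEuclideanLin_conjTranspose_mul_mul P 1 x y).symm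

theorem rayleighQuotient_toEuclideanCLM_conjTranspose_mul_mul (hP : Pᴴ * P = 1)
    (A : Matrix n n 𝕜) (x : EuclideanSpace 𝕜 m) :
    (toEuclideanCLM (n := m) (𝕜 := 𝕜) (Pᴴ * A * P)).rayleighQuotient x
      = (toEuclideanCLM (n := n) (𝕜 := 𝕜) A).rayleighQuotient (toEuclideanLin P x) := by
  have hnorm : ‖toEuclideanLin P x‖ = ‖x‖ := by
    rw [norm_eq_sqrt_re_inner (𝕜 := 𝕜), norm_eq_sqrt_re_inner (𝕜 := 𝕜),
      inner_toEuclideanLin_toEuclideanLin hP]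
  simp only [ContinuousLinearMap.rayleighQuotient, ContinuousLinearMap.reApplyInnerSelf_apply,
    ← ContinuousLinearMap.coe_coe, coe_toEuclideanCLM_eq_toEuclideanLin,
    inner_toEuclideanLin_conjTranspose_mul_mul, hnorm]

namespace IsHermitian

variable {A : Matrix n n 𝕜} (hA : A.IsHermitian)

def spectralSubspace (s : Set ℝ) : Submodule 𝕜 (EuclideanSpace 𝕜 n) :=
  Submodule.span 𝕜 (Set.range fun j : {j // hA.eigenvalues j ∈ s} => hA.eigenvectorBasis j)

theorem finrank_spectralSubspace (s : Set ℝ) [DecidablePred (· ∈ s)] :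
    Module.finrank 𝕜 (hA.spectralSubspace s) = #{j | hA.eigenvalues j ∈ s} :=
  (finrank_span_eq_card (hA.eigenvectorBasis.orthonormal.comp _
    Subtype.val_injective).linearIndependent).trans (Fintype.card_subtype _)

theorem toEuclideanCLM_eigenvectorBasis (j : n) :
    toEuclideanCLM (n := n) (𝕜 := 𝕜) A (hA.eigenvectorBasis j)
      = (hA.eigenvalues j : 𝕜) • hA.eigenvectorBasis j := by
  apply WithLp.ofLp_injective
  rw [ofLp_toEuclideanCLM, hA.mulVec_eigenvectorBasis, WithLp.ofLp_smul,
    RCLike.real_smul_eq_coe_smul (K := 𝕜)]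

theorem rayleighQuotient_mem_of_mem_spectralSubspace {s : Set ℝ} (hs : Convex ℝ s)
    {x : EuclideanSpace 𝕜 n} (hx : x ∈ hA.spectralSubspace s) (hx0 : x ≠ 0) :
    (toEuclideanCLM (n := n) (𝕜 := 𝕜) A).rayleighQuotient x ∈ s := by
  classical
  exact ContinuousLinearMap.rayleighQuotient_mem_of_mem_span_eigenvectors _
    (hA.eigenvectorBasis.orthonormal.comp _ Subtype.val_injective)
    (fun j => hA.toEuclideanCLM_eigenvectorBasis j) hs (fun j => j.2) hx hx0

theorem card_eigenvalues_mem_add_card_eigenvalues_mem_le {P : Matrix n m 𝕜} (hP : Pᴴ * P = 1)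
    {B : Matrix m m 𝕜} (hB : B.IsHermitian) (hBA : B = Pᴴ * A * P) {s s' : Set ℝ}
    [DecidablePred (· ∈ s)] [DecidablePred (· ∈ s')] (hs : Convex ℝ s) (hs' : Convex ℝ s')
    (hss' : Disjoint s s') :
    #{j | hB.eigenvalues j ∈ s} + #{i | hA.eigenvalues i ∈ s'} ≤ Fintype.card n := by
  have hP_inj : Function.Injective (toEuclideanLin P) :=
    ((toEuclideanLin P).isometryOfInner (inner_toEuclideanLin_toEuclideanLin hP)).injective
  rw [← hB.finrank_spectralSubspace, ← hA.finrank_spectralSubspace,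
    ← finrank_euclideanSpace (𝕜 := 𝕜),
    (Submodule.equivMapOfInjective _ hP_inj (hB.spectralSubspace s)).finrank_eq]
  refine Submodule.finrank_add_finrank_le_of_disjoint (Submodule.disjoint_def.2 ?_)
  rintro _ ⟨x, hx, rfl⟩ hxA
  by_contra hx0
  have hAx := hA.rayleighQuotient_mem_of_mem_spectralSubspace hs' hxA hx0
  rw [← rayleighQuotient_toEuclideanCLM_conjTranspose_mul_mul hP, ← hBA] at hAx
  exact hss'.ne_of_mem (hB.rayleighQuotient_mem_of_mem_spectralSubspace hs hx
    (by rintro rfl; simp at hx0)) hAx rfl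

theorem card_eigenvalues_submatrix_mem_le {e : m → n} (he : Function.Injective e)
    (hB : (A.submatrix e e).IsHermitian) {s : Set ℝ} [DecidablePred (· ∈ s)]
    (hs : Convex ℝ s) (hsc : Convex ℝ sᶜ) :
    #{j | hB.eigenvalues j ∈ s} ≤ #{i | hA.eigenvalues i ∈ s} := by
  have h := hA.card_eigenvalues_mem_add_card_eigenvalues_mem_le
    (conjTranspose_submatrix_one_mul_self he) hB (conjTranspose_submatrix_one_mul_mul A e).symm
    hs hsc disjoint_compl_right
  have := card_filter_add_card_filter_not (s := univ) (fun i => hA.eigenvalues i ∈ s)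
  simp only [Set.mem_compl_iff, card_univ] at h this
  omega

end IsHermitian

end Matrix

theorem Finset.card_filter_eq_of_multiset_map_eq {ι α : Type*} [Fintype ι] {f g : ι → α}
    (h : Multiset.map f univ.val = Multiset.map g univ.val) (p : α → Prop) [DecidablePred p] :
    #{i | p (f i)} = #{i | p (g i)} := by
  have hcount := congrArg (Multiset.countP p) h
  rwa [Multiset.countP_map, Multiset.countP_map] at hcount

namespace Antitone

variable {α : Type*} [LinearOrder α] {k : ℕ} {f : Fin k → α}

theorem le_apply_iff_lt_card_filter (hf : Antitone f) (a : α) (i : Fin k) :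
    a ≤ f i ↔ (i : ℕ) < #{j | a ≤ f j} := by
  constructor
  · intro h
    calc (i : ℕ) < #(Iic i) := by simp
      _ ≤ _ := card_le_card fun j hj => by
        simp only [mem_Iic, mem_filter, mem_univ, true_and] at hj ⊢
        exact h.trans (hf hj)
  · intro h
    by_contra! hlt
    have hsub : ({j | a ≤ f j} : Finset (Fin k)) ⊆ Iio i := fun j hj => by
      simp only [mem_Iio, mem_filter, mem_univ, true_and] at hj ⊢
      by_contra! hij
      exact ((hf hij).trans_lt hlt).not_ge hj
    have := card_le_card hsub
    rw [Fin.card_Iio] at this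
    omega

theorem apply_le_iff_le_card_filter_add (hf : Antitone f) (a : α) (i : Fin k) :
    f i ≤ a ↔ k ≤ #{j | f j ≤ a} + i := by
  constructor
  · intro h
    have := card_le_card (s := Ici i) (t := {j | f j ≤ a}) fun j hj => by
      simp only [mem_Ici, mem_filter, mem_univ, true_and] at hj ⊢
      exact (hf hj).trans h
    rw [Fin.card_Ici] at this
    omega
  · intro h
    by_contra! hlt
    have hsub : ({j | f j ≤ a} : Finset (Fin k)) ⊆ Ioi i := fun j hj => by
      simp only [mem_Ioi, mem_filter, mem_univ, true_and] at hj ⊢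
      by_contra! hji
      exact (hlt.trans_le (hf hji)).not_ge hj
    have := card_le_card hsub
    rw [Fin.card_Ioi] at this
    omega

end Antitone

/-- Cauchy interlacing: for a Hermitian matrix `M` of size `n` and
its main minor `M'` of size `n - 1`, the ordered (decreasing) eigenvalues
`μ₁ ≥ ... ≥ μ_{n-1}` of `M'` interlace the ordered eigenvalues
`λ₁ ≥ ... ≥ λ_n` of `M`. -/
theorem minor_eigenvalues_interlace (n : ℕ)
    (M : Matrix (Fin (n + 1)) (Fin (n + 1)) ℂ) (hM : M.IsHermitian)
    (M' : Matrix (Fin n) (Fin n) ℂ) (hM'def : M' = M.submatrix Fin.castSucc Fin.castSucc)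
    (hM' : M'.IsHermitian)
    (lam : Fin (n + 1) → ℝ) (mu : Fin n → ℝ)
    (hlam_dec : Antitone lam) (hmu_dec : Antitone mu)
    (hlam : Multiset.map lam Finset.univ.val = Multiset.map hM.eigenvalues Finset.univ.val)
    (hmu : Multiset.map mu Finset.univ.val = Multiset.map hM'.eigenvalues Finset.univ.val) :
    ∀ i : Fin n, lam i.castSucc ≥ mu i ∧ mu i ≥ lam i.succ := by
  subst hM'def
  have hcount (s : Set ℝ) [DecidablePred (· ∈ s)] (hs : Convex ℝ s) (hsc : Convex ℝ sᶜ) :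
      #{j | mu j ∈ s} ≤ #{j | lam j ∈ s} := by
    rw [card_filter_eq_of_multiset_map_eq hmu, card_filter_eq_of_multiset_map_eq hlam]
    exact hM.card_eigenvalues_submatrix_mem_le (Fin.castSucc_injective n) hM' hs hsc
  intro i
  constructor
  · have h := hcount (Set.Ici (mu i)) (convex_Ici _) (by simpa using convex_Iio (mu i))
    simp only [Set.mem_Ici] at h
    rw [ge_iff_le, hlam_dec.le_apply_iff_lt_card_filter, Fin.val_castSucc]
    exact ((hmu_dec.le_apply_iff_lt_card_filter _ i).1 le_rfl).trans_le h
  · have h := hcount (Set.Iic (mu i)) (convex_Iic _) (by simpa using convex_Ioi (mu i))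
    simp only [Set.mem_Iic] at h
    have hmu_i := (hmu_dec.apply_le_iff_le_card_filter_add _ i).1 le_rfl
    rw [ge_iff_le, hlam_dec.apply_le_iff_le_card_filter_add, Fin.val_succ]
    omega
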